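/- arXiv:2603.25390 — 2 statements merged into one kernel-verified Lean document; each statement's English description precedes it below -/
import Mathlib

section
/- Let M ∈ ℝ^{n×n} be symmetric positive definite, H ∈ ℝ^{n×n} symmetric, and let u₁, …, uₙ be an M-orthonormal basis with H uⱼ = λⱼ M uⱼ for all j. Let V = [u₁, …, u_k] and η > 0, and set J_xx = −η R_V^M M⁻¹ H. Then J_xx uⱼ = η λⱼ uⱼ for j ≤ k and J_xx uⱼ = −η λⱼ uⱼ for j > k. -/
open Matrix

lemma sum_mulVec' {n : ℕ} (s : Finset (Fin n)) (A : Fin n → Matrix (Fin n) (Fin n) ℝ)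
    (v : Fin n → ℝ) : (∑ i ∈ s, A i) *ᵥ v = ∑ i ∈ s, A i *ᵥ v := by
  ext l
  simp [mulVec, dotProduct, Matrix.sum_apply, Finset.sum_mul]
  rw [Finset.sum_comm]

lemma vecMulVec_mulVec' {n : ℕ} (w v x : Fin n → ℝ) :
    vecMulVec w v *ᵥ x = (v ⬝ᵥ x) • w := by
  ext i
  simp only [vecMulVec, mulVec, dotProduct, Matrix.of_apply, Pi.smul_apply, smul_eq_mul]
  rw [Finset.sum_mul]
  exact Finset.sum_congr rfl fun _ _ => by ring

/-- Let `M` be SPD, `H` symmetric, `u₁, …, uₙ` an `M`-orthonormal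
basis of generalized eigenvectors `H uⱼ = λⱼ M uⱼ`, `V = [u₁, …, u_k]` and
`η > 0`. Then `J_xx = −η R_V^M M⁻¹ H` satisfies `J_xx uⱼ = η λⱼ uⱼ` for
`j ≤ k` and `J_xx uⱼ = −η λⱼ uⱼ` for `j > k` (0-indexed: `j < k` resp. `j ≥ k`). -/
theorem Jxx_eigenvalues
    (n k : ℕ) (hk : k ≤ n) (M H : Matrix (Fin n) (Fin n) ℝ)
    (hM : M.PosDef) (hH : H.IsSymm)
    (u : Fin n → (Fin n → ℝ)) (lam : Fin n → ℝ)
    (hortho : ∀ i j, u i ⬝ᵥ (M *ᵥ u j) = if i = j then (1 : ℝ) else 0)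
    (heig : ∀ j, H *ᵥ u j = lam j • (M *ᵥ u j))
    (η : ℝ) (hη : 0 < η) :
    ∀ j : Fin n,
      (-(η • ((1 - (2 : ℝ) • ∑ i ∈ Finset.univ.filter (fun i : Fin n => (i : ℕ) < k),
          vecMulVec (u i) (u i) * M) * (M⁻¹ * H)))) *ᵥ u j
        = (if (j : ℕ) < k then η * lam j else -(η * lam j)) • u j := by
  intro j
  have hMinv : M⁻¹ * M = 1 := Matrix.nonsing_inv_mul M (isUnit_iff_ne_zero.mpr hM.det_pos.ne')
  have h1 : (M⁻¹ * H) *ᵥ u j = lam j • u j := by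
    rw [← Matrix.mulVec_mulVec, heig j, Matrix.mulVec_smul, Matrix.mulVec_mulVec,
      hMinv, Matrix.one_mulVec]
  set S := ∑ i ∈ Finset.univ.filter (fun i : Fin n => (i : ℕ) < k),
      vecMulVec (u i) (u i) * M with hS
  have hSu : S *ᵥ u j = (if (j : ℕ) < k then u j else 0) := by
    rw [hS, sum_mulVec']
    have : ∀ i ∈ Finset.univ.filter (fun i : Fin n => (i : ℕ) < k),
        (vecMulVec (u i) (u i) * M) *ᵥ u j = (if i = j then (1:ℝ) else 0) • u i := by
      intro i _
      rw [← Matrix.mulVec_mulVec, vecMulVec_mulVec', hortho i j]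
    rw [Finset.sum_congr rfl this]
    by_cases hj : (j : ℕ) < k
    · rw [if_pos hj, Finset.sum_eq_single j]
      · simp
      · intro b _ hb; simp [hb]
      · intro hjm; simp [hj] at hjm
    · rw [if_neg hj]
      apply Finset.sum_eq_zero
      intro i hi
      have : i ≠ j := by
        rintro rfl
        exact hj (Finset.mem_filter.mp hi).2
      simp [this]
  have key : (1 - (2:ℝ) • S) *ᵥ u j = (if (j : ℕ) < k then -u j else u j) := by
    rw [Matrix.sub_mulVec, Matrix.one_mulVec, Matrix.smul_mulVec, hSu]
    by_cases hj : (j : ℕ) < k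
    · simp only [hj, if_true]; module
    · simp [hj]
  rw [Matrix.neg_mulVec, Matrix.smul_mulVec, ← Matrix.mulVec_mulVec, h1,
    Matrix.mulVec_smul, key]
  by_cases hj : (j : ℕ) < k
  · simp [hj, smul_smul]
  · simp [hj, smul_smul]
end

section
/- Let M ∈ ℝ^{n×n} be symmetric positive definite, H ∈ ℝ^{n×n} symmetric, and let u₁, …, uₙ be an M-orthonormal basis with H uⱼ = λⱼ M uⱼ, where λ₁ ≤ ⋯ ≤ λ_k < 0 < λ_{k+1} ≤ ⋯ ≤ λₙ. Let V = [u₁, …, u_k] and η > 0. Then every eigenvalue of the matrix J_xx = −η R_V^M M⁻¹ H is real and negative: its spectrum is exactly {η λⱼ : j ≤ k} ∪ {−η λⱼ : j > k} ⊂ (−∞, 0). -/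
open Matrix

private lemma vecMulVec_mulVec_aux {n : ℕ} (a b x : Fin n → ℝ) :
    (vecMulVec a b) *ᵥ x = (b ⬝ᵥ x) • a := by
  ext i
  simp only [vecMulVec_apply, mulVec, dotProduct, Pi.smul_apply, smul_eq_mul, Finset.sum_mul]
  exact Finset.sum_congr rfl fun j _ => by ring

private lemma sum_mulVec_aux {n : ℕ} (s : Finset (Fin n)) (A : Fin n → Matrix (Fin n) (Fin n) ℝ)
    (x : Fin n → ℝ) : (∑ i ∈ s, A i) *ᵥ x = ∑ i ∈ s, (A i *ᵥ x) := by
  ext j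
  simp only [mulVec, dotProduct, Matrix.sum_apply, Finset.sum_mul, Finset.sum_apply]
  rw [Finset.sum_comm]

/-- Let `M` be SPD, `H` symmetric, `u₁, …, uₙ` an `M`-orthonormal
basis with `H uⱼ = λⱼ M uⱼ`, where `λ₁ ≤ ⋯ ≤ λ_k < 0 < λ_{k+1} ≤ ⋯ ≤ λₙ`.
Then every eigenvalue of `J_xx = −η R_V^M M⁻¹ H` is real and negative: the
(complex) spectrum is exactly `{ηλⱼ : j ≤ k} ∪ {−ηλⱼ : j > k} ⊂ (−∞, 0)`. -/
theorem Jxx_spectrum_negative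
    (n k : ℕ) (hk : k ≤ n) (M H : Matrix (Fin n) (Fin n) ℝ)
    (hM : M.PosDef) (hH : H.IsSymm)
    (u : Fin n → (Fin n → ℝ)) (lam : Fin n → ℝ)
    (hortho : ∀ i j, u i ⬝ᵥ (M *ᵥ u j) = if i = j then (1 : ℝ) else 0)
    (heig : ∀ j, H *ᵥ u j = lam j • (M *ᵥ u j))
    (hmono : Monotone lam)
    (hneg : ∀ j : Fin n, (j : ℕ) < k → lam j < 0)
    (hpos : ∀ j : Fin n, k ≤ (j : ℕ) → 0 < lam j)
    (η : ℝ) (hη : 0 < η) :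
    spectrum ℂ ((-(η • ((1 - (2 : ℝ) • ∑ i ∈ Finset.univ.filter (fun i : Fin n => (i : ℕ) < k),
          vecMulVec (u i) (u i) * M) * (M⁻¹ * H)))).map Complex.ofReal)
      = Complex.ofReal ''
          {x : ℝ | ∃ j : Fin n, x = if (j : ℕ) < k then η * lam j else -(η * lam j)} ∧
    {x : ℝ | ∃ j : Fin n, x = if (j : ℕ) < k then η * lam j else -(η * lam j)}
      ⊆ Set.Iio (0 : ℝ) := by
  have hMdet : IsUnit M.det := isUnit_iff_ne_zero.mpr (ne_of_gt hM.det_pos)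
  set μ : Fin n → ℝ := fun j => if (j : ℕ) < k then η * lam j else -(η * lam j) with hμ
  set P : Matrix (Fin n) (Fin n) ℝ :=
    ∑ i ∈ Finset.univ.filter (fun i : Fin n => (i : ℕ) < k), vecMulVec (u i) (u i) * M with hP
  set A : Matrix (Fin n) (Fin n) ℝ :=
    -(η • ((1 - (2 : ℝ) • P) * (M⁻¹ * H))) with hA
  -- key eigenvector computation
  have key : ∀ j, A *ᵥ u j = μ j • u j := by
    intro j
    have h1 : (M⁻¹ * H) *ᵥ u j = lam j • u j := by
      rw [← mulVec_mulVec, heig j, mulVec_smul, mulVec_mulVec, Matrix.nonsing_inv_mul M hMdet,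
        one_mulVec]
    have hPj : P *ᵥ u j = if (j : ℕ) < k then u j else 0 := by
      rw [hP, sum_mulVec_aux]
      have hterm : ∀ i ∈ Finset.univ.filter (fun i : Fin n => (i : ℕ) < k),
          (vecMulVec (u i) (u i) * M) *ᵥ u j
            = (if i = j then (1:ℝ) else 0) • u i := by
        intro i _
        rw [← mulVec_mulVec, vecMulVec_mulVec_aux, hortho i j]
      rw [Finset.sum_congr rfl hterm]
      by_cases hj : (j : ℕ) < k
      · rw [if_pos hj, Finset.sum_eq_single j]
        · simp
        · intro i _ hij; simp [hij]
        · intro h; exact absurd (Finset.mem_filter.mpr ⟨Finset.mem_univ j, hj⟩) h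
      · rw [if_neg hj]
        apply Finset.sum_eq_zero
        intro i hi
        have : i ≠ j := by
          rintro rfl; exact hj (Finset.mem_filter.mp hi).2
        simp [this]
    rw [hA, neg_mulVec, smul_mulVec, ← mulVec_mulVec, h1, mulVec_smul, sub_mulVec,
      one_mulVec, smul_mulVec, hPj]
    by_cases hj : (j : ℕ) < k
    · rw [if_pos hj]
      ext i
      simp only [hμ, if_pos hj, Pi.smul_apply, Pi.neg_apply, Pi.sub_apply, smul_eq_mul]
      ring
    · rw [if_neg hj]
      ext i
      simp only [hμ, if_neg hj, Pi.smul_apply, Pi.neg_apply, Pi.sub_apply, smul_eq_mul,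
        smul_zero, Pi.zero_apply]
      ring
  -- the matrix of eigenvectors
  set U : Matrix (Fin n) (Fin n) ℝ := Matrix.of (fun i j => u j i) with hU
  have hUMU : Uᵀ * M * U = 1 := by
    ext i j
    have h := hortho i j
    simp only [mulVec, dotProduct, Finset.mul_sum] at h
    simp only [Matrix.mul_apply, Matrix.transpose_apply, hU, Matrix.of_apply, Matrix.one_apply,
      Finset.sum_mul]
    rw [Finset.sum_comm, ← h]
    exact Finset.sum_congr rfl fun a _ => Finset.sum_congr rfl fun b _ => by ring
  have hUdet : IsUnit U.det := by
    have h := congrArg Matrix.det hUMU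
    rw [Matrix.det_mul, Matrix.det_mul, Matrix.det_one, Matrix.det_transpose] at h
    have h2 : IsUnit (U.det * M.det * U.det) := by rw [h]; exact isUnit_one
    exact isUnit_of_mul_isUnit_right h2
  have hAU : A * U = U * Matrix.diagonal μ := by
    ext i j
    have h := congrFun (key j) i
    simp only [mulVec, dotProduct, Pi.smul_apply, smul_eq_mul] at h
    rw [Matrix.mul_apply, Matrix.mul_diagonal]
    simp only [hU, of_apply]
    rw [show u j i * μ j = μ j * u j i from mul_comm _ _]
    exact h
  -- move to ℂ
  set Uc : Matrix (Fin n) (Fin n) ℂ := U.map Complex.ofReal with hUc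
  have hUcdet : IsUnit Uc.det := by
    rw [hUc, show U.map Complex.ofReal = Complex.ofRealHom.mapMatrix U from rfl,
      ← RingHom.map_det]
    exact isUnit_iff_ne_zero.mpr (by
      simp only [ne_eq, Complex.ofRealHom_eq_coe, Complex.ofReal_eq_zero]
      exact hUdet.ne_zero)
  have hAc : A.map Complex.ofReal
      = Uc * Matrix.diagonal (fun j => (μ j : ℂ)) * Uc⁻¹ := by
    have h2 : A.map Complex.ofReal * Uc = Uc * Matrix.diagonal (fun j => (μ j : ℂ)) := by
      have h3 := congrArg (fun B => B.map (Complex.ofRealHom : ℝ →+* ℂ)) hAU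
      simp only [Matrix.map_mul] at h3
      rw [hUc, show U.map Complex.ofReal = U.map Complex.ofRealHom from rfl,
        show A.map Complex.ofReal = A.map Complex.ofRealHom from rfl, h3,
        Matrix.diagonal_map (by simp)]
      rfl
    calc A.map Complex.ofReal
        = A.map Complex.ofReal * Uc * Uc⁻¹ := by
          rw [Matrix.mul_assoc, Matrix.mul_nonsing_inv Uc hUcdet, Matrix.mul_one]
      _ = Uc * Matrix.diagonal (fun j => (μ j : ℂ)) * Uc⁻¹ := by rw [h2]
  constructor
  · rw [hAc]
    have hUcunit : IsUnit Uc := (Matrix.isUnit_iff_isUnit_det Uc).mpr hUcdet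
    obtain ⟨v, hv⟩ := hUcunit
    have hinv : Uc⁻¹ = ↑v⁻¹ := by
      rw [← hv, Matrix.coe_units_inv]
    rw [hinv, ← hv, spectrum.units_conjugate, spectrum_diagonal]
    ext z
    simp only [Set.mem_range, Set.mem_image, Set.mem_setOf_eq]
    constructor
    · rintro ⟨j, rfl⟩; exact ⟨μ j, ⟨j, rfl⟩, rfl⟩
    · rintro ⟨x, ⟨j, rfl⟩, rfl⟩; exact ⟨j, rfl⟩
  · rintro x ⟨j, rfl⟩
    by_cases hj : (j : ℕ) < k
    · rw [if_pos hj]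
      exact Set.mem_Iio.mpr (mul_neg_of_pos_of_neg hη (hneg j hj))
    · rw [if_neg hj]
      exact Set.mem_Iio.mpr (neg_neg_of_pos (mul_pos hη (hpos j (le_of_not_gt hj))))
end
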